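/- arXiv:1506.04785 — 2 statements merged into one kernel-verified Lean document; each statement's English description precedes it below -/
import Mathlib

section
/- If x and y are two generators of an n×n grid (i.e., sets of n points, one on each horizontal and one on each vertical grid circle of the torus) and r is an empty rectangle connecting x to y, then the Maslov gradings satisfy M(x) − M(y) = 1 − 2·n_O(r), where n_O(r) is the number of O-markings contained in r. -/
/-!
STATEMENT 1: For generators x, y of an n×n grid connected by an empty rectangle r,
the Maslov gradings satisfy M(x) − M(y) = 1 − 2 n_O(r).

Generators are modelled by permutations σ : Fin n ≃ Fin n (the generator has one point
(i, σ i) on each vertical and horizontal grid circle); the O-markings are placed at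
half-integer coordinates (i + 1/2, ρ i + 1/2), one in each row and column.  The Maslov
grading is M(x) = J(x − O, x − O) + 1, expanded bilinearly.  A (planar) rectangle
connecting x to y has its lower-left and upper-right corners on x, its other two corners
on y, and x, y agree elsewhere; it is empty if its interior contains no point of x.
-/

noncomputable section
open Finset

attribute [local instance] Classical.propDecidable

def Ic (A B : Finset (ℝ × ℝ)) : ℕ :=
  ((A ×ˢ B).filter fun p => p.1.1 < p.2.1 ∧ p.1.2 < p.2.2).card

def Jc (A B : Finset (ℝ × ℝ)) : ℚ := ((Ic A B : ℚ) + (Ic B A : ℚ)) / 2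

/-- The points of the generator associated to a permutation `σ`. -/
def genPts {n : ℕ} (σ : Equiv.Perm (Fin n)) : Finset (ℝ × ℝ) :=
  Finset.univ.image fun i : Fin n => ((i.val : ℝ), ((σ i).val : ℝ))

/-- The O-markings, at half-integer coordinates, one per row and per column. -/
def oPts {n : ℕ} (ρ : Equiv.Perm (Fin n)) : Finset (ℝ × ℝ) :=
  Finset.univ.image fun i : Fin n => ((i.val : ℝ) + 1/2, ((ρ i).val : ℝ) + 1/2)

/-- The Maslov grading `M(x) = J(x − O, x − O) + 1`, expanded bilinearly. -/
def Maslov {n : ℕ} (σ ρ : Equiv.Perm (Fin n)) : ℚ :=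
  Jc (genPts σ) (genPts σ) - 2 * Jc (genPts σ) (oPts ρ) + Jc (oPts ρ) (oPts ρ) + 1

/-!
Write `I(A, B)` as a sum, over the points `a ∈ A`, of the number of points of `B` strictly
northeast of `a` (or dually over `b ∈ B`). Replacing the corners `(c₁, σ c₁), (c₂, σ c₂)` of a
rectangle by `(c₁, σ c₂), (c₂, σ c₁)` changes two terms of this sum, and inclusion–exclusion of
quadrants shows that `I(x, B) - I(y, B)` counts the points of `B` in the rectangle closed on its
northeast sides, while `I(B, x) - I(B, y)` counts those in the rectangle closed on its southwest
sides. For `B = O` both are `n_O(r)`, the markings sitting at half-integers. Finally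
`I(x, x) - I(y, y) = (I(x, x) - I(y, x)) + (I(y, x) - I(y, y))`, and emptiness of `r` leaves only
the corner `(c₂, σ c₂)` of `x` in the first rectangle and no point of `y` in the second.
-/

open Equiv

lemma Ic_eq_sum_left (A B : Finset (ℝ × ℝ)) :
    Ic A B = ∑ a ∈ A, #{b ∈ B | a.1 < b.1 ∧ a.2 < b.2} := by
  simp only [Ic, card_filter, sum_product]

lemma Ic_eq_sum_right (A B : Finset (ℝ × ℝ)) :
    Ic A B = ∑ b ∈ B, #{a ∈ A | a.1 < b.1 ∧ a.2 < b.2} := by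
  simp only [Ic, card_filter, sum_product_right]

lemma card_filter_and_add_card_filter_and {α : Type*} (s : Finset α) (P P' Q Q' : α → Prop)
    [DecidablePred P] [DecidablePred P'] [DecidablePred Q] [DecidablePred Q']
    (hP : ∀ a, P' a → P a) (hQ : ∀ a, Q' a → Q a) :
    #{a ∈ s | P a ∧ Q a} + #{a ∈ s | P' a ∧ Q' a} =
      #{a ∈ s | P a ∧ Q' a} + #{a ∈ s | P' a ∧ Q a} + #{a ∈ s | P a ∧ ¬P' a ∧ Q a ∧ ¬Q' a} := by
  simp only [card_filter, ← sum_add_distrib]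
  refine sum_congr rfl fun a _ => ?_
  have := hP a; have := hQ a
  by_cases P a <;> by_cases P' a <;> by_cases Q a <;> by_cases Q' a <;> simp_all

lemma sum_comp_swap_add {α β M : Type*} [Fintype α] [DecidableEq α] [AddCommMonoid M]
    (f : α → β) (g : α → β → M) (a b : α) :
    ∑ i, g i (f (swap a b i)) + (g a (f a) + g b (f b)) =
      ∑ i, g i (f i) + (g a (f b) + g b (f a)) := by
  rcases eq_or_ne a b with rfl | hab
  · simp
  have split (h : α → M) : ∑ i, h i = ∑ i ∈ univ \ {a, b}, h i + (h a + h b) := by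
    rw [← sum_pair hab, sum_sdiff (subset_univ _)]
  have off_ab : ∑ i ∈ univ \ {a, b}, g i (f (swap a b i)) = ∑ i ∈ univ \ {a, b}, g i (f i) := by
    refine sum_congr rfl fun i hi => ?_
    simp only [mem_sdiff, mem_insert, mem_singleton, not_or] at hi
    rw [swap_apply_of_ne_of_ne hi.2.1 hi.2.2]
  rw [split (fun i => g i (f (swap a b i))), split (fun i => g i (f i)), off_ab,
    swap_apply_left, swap_apply_right]
  abel

section Generators

variable {n : ℕ}

lemma genPts_injective (σ : Perm (Fin n)) :
    Function.Injective fun i : Fin n => ((i.val : ℝ), ((σ i).val : ℝ)) :=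
  fun i j h => Fin.ext (by simpa using congrArg Prod.fst h)

lemma oPts_injective (ρ : Perm (Fin n)) :
    Function.Injective fun i : Fin n => ((i.val : ℝ) + 1/2, ((ρ i).val : ℝ) + 1/2) :=
  fun i j h => Fin.ext (by simpa using congrArg Prod.fst h)

lemma sum_genPts {M : Type*} [AddCommMonoid M] (σ : Perm (Fin n)) (f : ℝ × ℝ → M) :
    ∑ p ∈ genPts σ, f p = ∑ i : Fin n, f (((i : ℕ) : ℝ), ((σ i : ℕ) : ℝ)) :=
  sum_image fun _ _ _ _ h => genPts_injective σ h

lemma card_filter_genPts (σ : Perm (Fin n)) (P : ℝ × ℝ → Prop) [DecidablePred P] :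
    #{p ∈ genPts σ | P p} = #{i : Fin n | P (((i : ℕ) : ℝ), ((σ i : ℕ) : ℝ))} := by
  rw [genPts, filter_image, card_image_of_injective _ (genPts_injective σ)]

lemma card_filter_oPts (ρ : Perm (Fin n)) (P : ℝ × ℝ → Prop) [DecidablePred P] :
    #{p ∈ oPts ρ | P p} = #{i : Fin n | P (((i : ℕ) : ℝ) + 1/2, ((ρ i : ℕ) : ℝ) + 1/2)} := by
  rw [oPts, filter_image, card_image_of_injective _ (oPts_injective ρ)]

lemma Ic_genPts_mul_swap_left (σ : Perm (Fin n)) (B : Finset (ℝ × ℝ)) {c₁ c₂ : Fin n}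
    (hc : c₁ ≤ c₂) (hr : σ c₁ ≤ σ c₂) :
    Ic (genPts (σ * swap c₁ c₂)) B +
        #{b ∈ B | (c₁ : ℝ) < b.1 ∧ b.1 ≤ (c₂ : ℝ) ∧ (σ c₁ : ℝ) < b.2 ∧ b.2 ≤ (σ c₂ : ℝ)} =
      Ic (genPts σ) B := by
  let g : Fin n → Fin n → ℕ := fun i j => #{b ∈ B | (i : ℝ) < b.1 ∧ (j : ℝ) < b.2}
  have hsum (π : Perm (Fin n)) : Ic (genPts π) B = ∑ i, g i (π i) := by
    rw [Ic_eq_sum_left, sum_genPts]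
  have hswap := sum_comp_swap_add σ g c₁ c₂
  have hquad : g c₁ (σ c₁) + g c₂ (σ c₂) = g c₁ (σ c₂) + g c₂ (σ c₁) +
      #{b ∈ B | (c₁ : ℝ) < b.1 ∧ b.1 ≤ (c₂ : ℝ) ∧ (σ c₁ : ℝ) < b.2 ∧ b.2 ≤ (σ c₂ : ℝ)} := by
    simpa only [not_lt] using card_filter_and_add_card_filter_and B
      (fun b => (c₁ : ℝ) < b.1) (fun b => (c₂ : ℝ) < b.1)
      (fun b => (σ c₁ : ℝ) < b.2) (fun b => (σ c₂ : ℝ) < b.2)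
      (fun b => lt_of_le_of_lt (by exact_mod_cast hc))
      (fun b => lt_of_le_of_lt (by exact_mod_cast hr))
  simp only [hsum, Perm.mul_apply]
  omega

lemma Ic_genPts_mul_swap_right (σ : Perm (Fin n)) (B : Finset (ℝ × ℝ)) {c₁ c₂ : Fin n}
    (hc : c₁ ≤ c₂) (hr : σ c₁ ≤ σ c₂) :
    Ic B (genPts (σ * swap c₁ c₂)) +
        #{b ∈ B | (c₁ : ℝ) ≤ b.1 ∧ b.1 < (c₂ : ℝ) ∧ (σ c₁ : ℝ) ≤ b.2 ∧ b.2 < (σ c₂ : ℝ)} =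
      Ic B (genPts σ) := by
  let g : Fin n → Fin n → ℕ := fun i j => #{b ∈ B | b.1 < (i : ℝ) ∧ b.2 < (j : ℝ)}
  have hsum (π : Perm (Fin n)) : Ic B (genPts π) = ∑ i, g i (π i) := by
    rw [Ic_eq_sum_right, sum_genPts]
  have hswap := sum_comp_swap_add σ g c₁ c₂
  have hquad : g c₂ (σ c₂) + g c₁ (σ c₁) = g c₂ (σ c₁) + g c₁ (σ c₂) +
      #{b ∈ B | (c₁ : ℝ) ≤ b.1 ∧ b.1 < (c₂ : ℝ) ∧ (σ c₁ : ℝ) ≤ b.2 ∧ b.2 < (σ c₂ : ℝ)} := by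
    rw [card_filter_and_add_card_filter_and B
      (fun b => b.1 < (c₂ : ℝ)) (fun b => b.1 < (c₁ : ℝ))
      (fun b => b.2 < (σ c₂ : ℝ)) (fun b => b.2 < (σ c₁ : ℝ))
      (fun b h => lt_of_lt_of_le h (by exact_mod_cast hc))
      (fun b h => lt_of_lt_of_le h (by exact_mod_cast hr))]
    congr 2
    exact filter_congr fun b _ => by simp only [not_lt]; tauto
  simp only [hsum, Perm.mul_apply]
  omega

lemma natCast_lt_add_half {a b : ℕ} : (a : ℝ) < b + 1/2 ↔ a ≤ b :=
  ⟨fun h => Nat.lt_succ_iff.mp (by exact_mod_cast (by linarith : (a : ℝ) < b + 1)),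
    fun h => by linarith [(Nat.cast_le (α := ℝ)).mpr h]⟩

lemma natCast_le_add_half {a b : ℕ} : (a : ℝ) ≤ b + 1/2 ↔ a ≤ b :=
  ⟨fun h => Nat.lt_succ_iff.mp (by exact_mod_cast (by linarith : (a : ℝ) < b + 1)),
    fun h => (natCast_lt_add_half.mpr h).le⟩

lemma add_half_le_natCast {a b : ℕ} : (b : ℝ) + 1/2 ≤ a ↔ b < a := by
  rw [← not_lt, natCast_lt_add_half, not_le]

lemma add_half_lt_natCast {a b : ℕ} : (b : ℝ) + 1/2 < a ↔ b < a := by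
  rw [← not_le, natCast_le_add_half, not_le]

lemma Ic_genPts_mul_swap_oPts (σ ρ : Perm (Fin n)) {c₁ c₂ : Fin n}
    (hc : c₁ ≤ c₂) (hr : σ c₁ ≤ σ c₂) :
    Ic (genPts (σ * swap c₁ c₂)) (oPts ρ) + #{i | c₁ ≤ i ∧ i < c₂ ∧ σ c₁ ≤ ρ i ∧ ρ i < σ c₂} =
      Ic (genPts σ) (oPts ρ) := by
  rw [← Ic_genPts_mul_swap_left σ (oPts ρ) hc hr, card_filter_oPts]
  simp only [natCast_lt_add_half, add_half_le_natCast, Fin.val_fin_le, Fin.val_fin_lt]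

lemma Ic_oPts_genPts_mul_swap (σ ρ : Perm (Fin n)) {c₁ c₂ : Fin n}
    (hc : c₁ ≤ c₂) (hr : σ c₁ ≤ σ c₂) :
    Ic (oPts ρ) (genPts (σ * swap c₁ c₂)) + #{i | c₁ ≤ i ∧ i < c₂ ∧ σ c₁ ≤ ρ i ∧ ρ i < σ c₂} =
      Ic (oPts ρ) (genPts σ) := by
  rw [← Ic_genPts_mul_swap_right σ (oPts ρ) hc hr, card_filter_oPts]
  simp only [natCast_le_add_half, add_half_lt_natCast, Fin.val_fin_le, Fin.val_fin_lt]

lemma card_filter_genPts_Ioc_Ioc {σ : Perm (Fin n)} {c₁ c₂ : Fin n} (hc : c₁ < c₂)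
    (hr : σ c₁ < σ c₂) (hempty : ∀ i : Fin n, c₁ < i → i < c₂ → ¬ (σ c₁ < σ i ∧ σ i < σ c₂)) :
    #{p ∈ genPts σ | (c₁ : ℝ) < p.1 ∧ p.1 ≤ (c₂ : ℝ) ∧ (σ c₁ : ℝ) < p.2 ∧ p.2 ≤ (σ c₂ : ℝ)} = 1 := by
  rw [card_filter_genPts, card_eq_one]
  refine ⟨c₂, eq_singleton_iff_unique_mem.mpr ⟨?_, fun i hi => ?_⟩⟩
  · simp [hc, hr]
  · simp only [mem_filter, mem_univ, true_and, Nat.cast_lt, Nat.cast_le, Fin.val_fin_lt,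
      Fin.val_fin_le] at hi
    obtain ⟨h₁, h₂, h₃, h₄⟩ := hi
    by_contra hne
    exact hempty i h₁ (lt_of_le_of_ne h₂ hne) ⟨h₃, lt_of_le_of_ne h₄ (σ.injective.ne hne)⟩

lemma card_filter_genPts_mul_swap_Ico_Ico {σ : Perm (Fin n)} {c₁ c₂ : Fin n}
    (hempty : ∀ i : Fin n, c₁ < i → i < c₂ → ¬ (σ c₁ < σ i ∧ σ i < σ c₂)) :
    #{p ∈ genPts (σ * swap c₁ c₂) |
      (c₁ : ℝ) ≤ p.1 ∧ p.1 < (c₂ : ℝ) ∧ (σ c₁ : ℝ) ≤ p.2 ∧ p.2 < (σ c₂ : ℝ)} = 0 := by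
  rw [card_filter_genPts, card_eq_zero, filter_eq_empty_iff]
  rintro i - ⟨h₁, h₂, h₃, h₄⟩
  simp only [Nat.cast_lt, Nat.cast_le, Fin.val_fin_lt, Fin.val_fin_le, Perm.mul_apply] at h₁ h₂ h₃ h₄
  rcases h₁.eq_or_lt with rfl | h₁
  · simp at h₄
  rw [swap_apply_of_ne_of_ne h₁.ne' h₂.ne] at h₃ h₄
  exact hempty i h₁ h₂ ⟨lt_of_le_of_ne h₃ (σ.injective.ne h₁.ne), h₄⟩

lemma Ic_genPts_mul_swap_self {σ : Perm (Fin n)} {c₁ c₂ : Fin n} (hc : c₁ < c₂)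
    (hr : σ c₁ < σ c₂) (hempty : ∀ i : Fin n, c₁ < i → i < c₂ → ¬ (σ c₁ < σ i ∧ σ i < σ c₂)) :
    Ic (genPts (σ * swap c₁ c₂)) (genPts (σ * swap c₁ c₂)) + 1 = Ic (genPts σ) (genPts σ) := by
  have hleft := Ic_genPts_mul_swap_left σ (genPts σ) hc.le hr.le
  have hright := Ic_genPts_mul_swap_right σ (genPts (σ * swap c₁ c₂)) hc.le hr.le
  rw [card_filter_genPts_Ioc_Ioc hc hr hempty] at hleft
  rw [card_filter_genPts_mul_swap_Ico_Ico hempty] at hright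
  omega

end Generators

theorem stmt1 {n : ℕ} (σ τ ρ : Equiv.Perm (Fin n)) (c₁ c₂ : Fin n)
    -- r is the rectangle with corners (c₁, σ c₁), (c₂, σ c₂) (on x) and
    -- (c₁, σ c₂), (c₂, σ c₁) (on y):
    (hc : c₁ < c₂) (hr : σ c₁ < σ c₂)
    (hτ : τ = σ * Equiv.swap c₁ c₂)
    -- r is empty: no point of x in its interior:
    (hempty : ∀ i : Fin n, c₁ < i → i < c₂ → ¬ (σ c₁ < σ i ∧ σ i < σ c₂)) :
    Maslov σ ρ - Maslov τ ρ =
      1 - 2 * ((Finset.univ.filter fun i : Fin n =>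
        c₁ ≤ i ∧ i < c₂ ∧ σ c₁ ≤ ρ i ∧ ρ i < σ c₂).card : ℚ) := by
  subst hτ
  simp only [Maslov, Jc, ← Ic_genPts_mul_swap_self hc hr hempty,
    ← Ic_genPts_mul_swap_oPts σ ρ hc.le hr.le, ← Ic_oPts_genPts_mul_swap σ ρ hc.le hr.le]
  push_cast
  ring
end
end

section
/- Define F^Q on generators by fixing F^Q(x₀)=0 for a basepoint generator x₀ and setting F^Q(x) = Q(p_x) for any domain p_x from x to x₀ with O_n(p_x)=𝕆(p_x)=0. Then F^Q is well defined, and for any generators x, y and any domain p from x to y with O_n(p)=𝕆(p)=0, one has F^Q(x) − F^Q(y) = Q(p). -/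
/-!
The boundary of a domain is its mixed discrete Laplacian on the torus, whose kernel (the
periodic domains) consists of the functions `a i + b j`. Normalising `a i₀ = b (ρ i₀) = 0`,
`Q` of such a function is `(n - 1) (∑ a + ∑ b) = (n - 1) O`, which vanishes when `O = 0`;
so `Q` agrees on any two admissible domains between the same generators. Admissible domains
exist between any two generators (partial sums of the difference of the permutation
matrices, minus a function of the row), so `F^Q(x) := Q(p_x)` is well defined, and
`F^Q(x) − F^Q(y) = Q(p)` follows by concatenating `p` with `p_y`.
-/

noncomputable section
open Finset

def IsGridDomain {n : ℕ} [NeZero n] (D : Fin n × Fin n → ℤ) (σ τ : Equiv.Perm (Fin n)) :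
    Prop :=
  ∀ i j : Fin n,
    D (i, j) - D (i - 1, j) - D (i, j - 1) + D (i - 1, j - 1) =
      (if σ i = j then 1 else 0) - (if τ i = j then 1 else 0)

def Ocnt {n : ℕ} (ρ : Equiv.Perm (Fin n)) (D : Fin n × Fin n → ℤ) : ℤ :=
  ∑ i : Fin n, D (i, ρ i)

def Qcnt {n : ℕ} (ρ : Equiv.Perm (Fin n)) (i₀ : Fin n) (D : Fin n × Fin n → ℤ) : ℤ :=
  ∑ s ∈ Finset.univ.filter (fun s : Fin n × Fin n => s.1 ≠ i₀ ∧ s.2 ≠ ρ i₀), D s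

section Grid

variable {n : ℕ} [NeZero n]

open Fin.NatCast in
lemma apply_eq_of_apply_sub_one_eq {α : Type*} (e : Fin n → α) (h : ∀ i, e (i - 1) = e i)
    (i j : Fin n) : e i = e j := by
  have key : ∀ k : ℕ, e (j - k) = e j := by
    intro k
    induction k with
    | zero => simp
    | succ k ih => rw [Nat.cast_succ, ← sub_sub, h, ih]
  simpa [Fin.cast_val_eq_self] using key (j - i).val

open Fin.NatCast in
lemma exists_sub_apply_sub_one_eq (f : Fin n → ℤ) (hf : ∑ i, f i = 0) :
    ∃ F : Fin n → ℤ, ∀ i, F i - F (i - 1) = f i := by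
  obtain ⟨m, rfl⟩ : ∃ m, n = m + 1 := Nat.exists_eq_succ_of_ne_zero (NeZero.ne n)
  refine ⟨fun i => ∑ k ∈ range (i.val + 1), f k, fun i => ?_⟩
  by_cases hi : i = 0
  · have hsum : ∑ k ∈ range (m + 1), f k = 0 := by
      rw [← Fin.sum_univ_eq_sum_range]
      simpa only [Fin.cast_val_eq_self] using hf
    simp [hi, hsum]
  · have hval : i.val = (i - 1).val + 1 := by
      have := Fin.val_sub_one_of_ne_zero hi
      have := Fin.pos_iff_ne_zero.mpr hi
      omega
    simp only
    rw [hval, sum_range_succ, ← hval, Fin.cast_val_eq_self, add_sub_cancel_left]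

lemma exists_laplacian_eq (M : Fin n × Fin n → ℤ) (hrow : ∀ i, ∑ j, M (i, j) = 0)
    (hcol : ∀ j, ∑ i, M (i, j) = 0) :
    ∃ D : Fin n × Fin n → ℤ,
      ∀ i j, D (i, j) - D (i - 1, j) - D (i, j - 1) + D (i - 1, j - 1) = M (i, j) := by
  choose G hG using fun i => exists_sub_apply_sub_one_eq (fun j => M (i, j)) (hrow i)
  have hG_col : ∀ j, ∑ i, G i j = ∑ i, G i 0 := by
    refine fun j => apply_eq_of_apply_sub_one_eq (fun k => ∑ i, G i k) (fun k => ?_) j 0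
    rw [eq_comm, ← sub_eq_zero, ← sum_sub_distrib]
    simpa only [hG] using hcol k
  -- the column sums of `G` are all equal to `c`, so correcting row `0` by `c` makes them vanish
  set c := ∑ i, G i 0
  choose D hD using fun j => exists_sub_apply_sub_one_eq (fun i => G i j - if i = 0 then c else 0)
    (by simp [sum_sub_distrib, hG_col j])
  refine ⟨fun s => D s.2 s.1, fun i j => ?_⟩
  have := hD j i
  have := hD (j - 1) i
  have := hG i j
  simp only at *
  linarith

lemma exists_isGridDomain (σ τ : Equiv.Perm (Fin n)) : ∃ D, IsGridDomain D σ τ := by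
  have hcol : ∀ (π : Equiv.Perm (Fin n)) j, ∑ i, (if π i = j then (1 : ℤ) else 0) = 1 :=
    fun π j => by rw [Equiv.sum_comp π (fun k => if k = j then (1 : ℤ) else 0), sum_ite_eq']; simp
  exact exists_laplacian_eq
    (fun s => (if σ s.1 = s.2 then 1 else 0) - (if τ s.1 = s.2 then 1 else 0))
    (fun i => by simp [sum_sub_distrib]) (fun j => by simp [sum_sub_distrib, hcol])

variable {p q : Fin n × Fin n → ℤ} {σ τ υ : Equiv.Perm (Fin n)}

lemma IsGridDomain.add (hp : IsGridDomain p σ τ) (hq : IsGridDomain q τ υ) :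
    IsGridDomain (p + q) σ υ := fun i j => by
  have := hp i j
  have := hq i j
  simp only [Pi.add_apply]
  linarith

lemma IsGridDomain.sub (hp : IsGridDomain p σ τ) (hq : IsGridDomain q σ τ) :
    IsGridDomain (p - q) τ τ := fun i j => by
  have := hp i j
  have := hq i j
  simp only [Pi.sub_apply, sub_self]
  linarith

lemma IsGridDomain.apply_eq_row_add_col (hp : IsGridDomain p σ σ) (i j i₀ j₀ : Fin n) :
    p (i, j) = p (i, j₀) + p (i₀, j) - p (i₀, j₀) := by
  have hrow : ∀ i j j', p (i, j) - p (i - 1, j) = p (i, j') - p (i - 1, j') := fun i =>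
    apply_eq_of_apply_sub_one_eq (fun j => p (i, j) - p (i - 1, j)) fun j => by
      have := hp i j
      rw [sub_self] at this
      linarith
  have := apply_eq_of_apply_sub_one_eq (fun i => p (i, j) - p (i, j₀)) (fun i => by
    have := hrow i j j₀
    linarith) i i₀
  linarith

end Grid

section Admissible

variable {n : ℕ} (ρ : Equiv.Perm (Fin n)) (i₀ : Fin n)

lemma Ocnt_add (p q : Fin n × Fin n → ℤ) : Ocnt ρ (p + q) = Ocnt ρ p + Ocnt ρ q :=
  sum_add_distrib

lemma Ocnt_sub (p q : Fin n × Fin n → ℤ) : Ocnt ρ (p - q) = Ocnt ρ p - Ocnt ρ q :=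
  sum_sub_distrib _ _

lemma Qcnt_add (p q : Fin n × Fin n → ℤ) : Qcnt ρ i₀ (p + q) = Qcnt ρ i₀ p + Qcnt ρ i₀ q :=
  sum_add_distrib

lemma Qcnt_sub (p q : Fin n × Fin n → ℤ) : Qcnt ρ i₀ (p - q) = Qcnt ρ i₀ p - Qcnt ρ i₀ q :=
  sum_sub_distrib _ _

variable [NeZero n]

def IsAdmissibleDomain (p : Fin n × Fin n → ℤ) (σ τ : Equiv.Perm (Fin n)) : Prop :=
  IsGridDomain p σ τ ∧ p (i₀, ρ i₀) = 0 ∧ Ocnt ρ p = 0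

lemma exists_isAdmissibleDomain (σ τ : Equiv.Perm (Fin n)) :
    ∃ p, IsAdmissibleDomain ρ i₀ p σ τ := by
  obtain ⟨D, hD⟩ := exists_isGridDomain σ τ
  -- subtracting a function of the row alone keeps the boundary, and this one vanishes on `(i, ρ i)`
  refine ⟨fun s => D s - D (s.1, ρ s.1), fun i j => ?_, sub_self _,
    sum_eq_zero fun i _ => sub_self _⟩
  have := hD i j
  simp only
  linarith

variable {ρ i₀} {p q : Fin n × Fin n → ℤ} {σ τ υ : Equiv.Perm (Fin n)}

lemma IsAdmissibleDomain.add (hp : IsAdmissibleDomain ρ i₀ p σ τ)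
    (hq : IsAdmissibleDomain ρ i₀ q τ υ) : IsAdmissibleDomain ρ i₀ (p + q) σ υ :=
  ⟨hp.1.add hq.1, by simp [hp.2.1, hq.2.1], by rw [Ocnt_add, hp.2.2, hq.2.2, add_zero]⟩

lemma IsAdmissibleDomain.sub (hp : IsAdmissibleDomain ρ i₀ p σ τ)
    (hq : IsAdmissibleDomain ρ i₀ q σ τ) : IsAdmissibleDomain ρ i₀ (p - q) τ τ :=
  ⟨hp.1.sub hq.1, by simp [hp.2.1, hq.2.1], by rw [Ocnt_sub, hp.2.2, hq.2.2, sub_zero]⟩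

lemma IsAdmissibleDomain.Qcnt_eq_zero_of_self (hp : IsAdmissibleDomain ρ i₀ p σ σ) :
    Qcnt ρ i₀ p = 0 := by
  obtain ⟨hgrid, h0, hO⟩ := hp
  set j₀ := ρ i₀
  have hsplit : ∀ i j, p (i, j) = p (i, j₀) + p (i₀, j) := fun i j => by
    rw [hgrid.apply_eq_row_add_col i j i₀ j₀, h0, sub_zero]
  have hsum : ∑ i, p (i, j₀) + ∑ j, p (i₀, j) = 0 := by
    rw [← hO, Ocnt, ← Equiv.sum_comp ρ (fun j => p (i₀, j)), ← sum_add_distrib]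
    exact sum_congr rfl fun i _ => (hsplit i (ρ i)).symm
  have hcells : univ.filter (fun s : Fin n × Fin n => s.1 ≠ i₀ ∧ s.2 ≠ j₀) =
      univ.erase i₀ ×ˢ univ.erase j₀ := by
    ext
    simp
  calc Qcnt ρ i₀ p = ∑ s ∈ univ.erase i₀ ×ˢ univ.erase j₀, (p (s.1, j₀) + p (i₀, s.2)) := by
        rw [Qcnt, hcells]
        exact sum_congr rfl fun s _ => hsplit s.1 s.2
    _ = (n - 1 : ℕ) • (∑ i, p (i, j₀) + ∑ j, p (i₀, j)) := by
        simp [sum_product, sum_add_distrib, h0, mul_add, mul_sum]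
    _ = 0 := by rw [hsum, smul_zero]

lemma IsAdmissibleDomain.Qcnt_eq (hp : IsAdmissibleDomain ρ i₀ p σ τ)
    (hq : IsAdmissibleDomain ρ i₀ q σ τ) : Qcnt ρ i₀ p = Qcnt ρ i₀ q := by
  rw [← sub_eq_zero, ← Qcnt_sub]
  exact (hp.sub hq).Qcnt_eq_zero_of_self

end Admissible

theorem stmt7 {n : ℕ} [NeZero n] (ρ : Equiv.Perm (Fin n)) (i₀ : Fin n)
    (σ₀ : Equiv.Perm (Fin n)) :
    ∃ FQ : Equiv.Perm (Fin n) → ℤ,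
      FQ σ₀ = 0 ∧
      -- F^Q(x) = Q(p_x) for any admissible domain p_x from x to the basepoint x₀
      (∀ (σ : Equiv.Perm (Fin n)) (p : Fin n × Fin n → ℤ),
        IsGridDomain p σ σ₀ → p (i₀, ρ i₀) = 0 → Ocnt ρ p = 0 → FQ σ = Qcnt ρ i₀ p) ∧
      -- and F^Q(x) − F^Q(y) = Q(p) for any admissible domain from x to y
      (∀ (σ τ : Equiv.Perm (Fin n)) (p : Fin n × Fin n → ℤ),
        IsGridDomain p σ τ → p (i₀, ρ i₀) = 0 → Ocnt ρ p = 0 →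
          FQ σ - FQ τ = Qcnt ρ i₀ p) := by
  choose P hP using fun σ => exists_isAdmissibleDomain ρ i₀ σ σ₀
  have hdiff : ∀ σ τ p, IsGridDomain p σ τ → p (i₀, ρ i₀) = 0 → Ocnt ρ p = 0 →
      Qcnt ρ i₀ (P σ) - Qcnt ρ i₀ (P τ) = Qcnt ρ i₀ p := fun σ τ p hp h0 hO => by
    rw [(hP σ).Qcnt_eq (IsAdmissibleDomain.add ⟨hp, h0, hO⟩ (hP τ)), Qcnt_add,
      add_sub_cancel_right]
  have hbase : Qcnt ρ i₀ (P σ₀) = 0 := (hP σ₀).Qcnt_eq_zero_of_self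
  refine ⟨fun σ => Qcnt ρ i₀ (P σ), hbase, fun σ p hp h0 hO => ?_, hdiff⟩
  simpa [hbase] using hdiff σ σ₀ p hp h0 hO
end
end
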